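/- arXiv:1902.08420 — 2 statements merged into one kernel-verified Lean document; each statement's English description precedes it below -/
import Mathlib

section
/- Completeness of the commuting diagrams for (top) in Simple: for all Simple expressions e, t, t', if e →top t and t →sr t', then e →sr t', or there exists e1 such that e →sr e1 and e1 →top t', or there exists e1 such that e →sr e1 and e1 →sr t'. -/
/-- Expressions of the calculus `Simple`: `e ::= ⊥ | ⊤ | ¬e | e ∧ e`. -/
inductive SExp : Type where
  | bot : SExp
  | top : SExp
  | neg : SExp → SExp
  | and : SExp → SExp → SExp

/-- Evaluation contexts: `A ::= [·] | ¬A | A ∧ e`. -/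
inductive ECtx : Type where
  | hole : ECtx
  | neg : ECtx → ECtx
  | and : ECtx → SExp → ECtx

/-- Hole filling for evaluation contexts. -/
def ECtx.fill : ECtx → SExp → SExp
  | .hole, e => e
  | .neg A, e => .neg (A.fill e)
  | .and A t, e => .and (A.fill e) t

/-- General contexts: `C ::= [·] | ¬C | C ∧ e | e ∧ C`. -/
inductive GCtx : Type where
  | hole : GCtx
  | neg : GCtx → GCtx
  | andL : GCtx → SExp → GCtx
  | andR : SExp → GCtx → GCtx

/-- Hole filling for general contexts. -/
def GCtx.fill : GCtx → SExp → SExp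
  | .hole, e => e
  | .neg C, e => .neg (C.fill e)
  | .andL C t, e => .and (C.fill e) t
  | .andR t C, e => .and t (C.fill e)

/-- Labels of the standard-reduction rules. -/
inductive SRLab : Type where
  | bot | top | neg1 | neg2

/-- The labelled standard reduction rules of `Simple`. -/
inductive SRL : SRLab → SExp → SExp → Prop where
  | bot (A : ECtx) (e : SExp) : SRL .bot (A.fill (.and .bot e)) (A.fill .bot)
  | top (A : ECtx) (e : SExp) : SRL .top (A.fill (.and .top e)) (A.fill e)
  | neg1 (A : ECtx) : SRL .neg1 (A.fill (.neg .top)) (A.fill .bot)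
  | neg2 (A : ECtx) : SRL .neg2 (A.fill (.neg .bot)) (A.fill .top)

/-- The standard reduction `→sr` (union of the four rules). -/
def SR (e e' : SExp) : Prop := ∃ a, SRL a e e'

/-- The transformation `(top)`: `C[⊤ ∧ e] →top C[e]` for all general contexts `C`. -/
inductive TopT : SExp → SExp → Prop where
  | mk (C : GCtx) (e : SExp) : TopT (C.fill (.and .top e)) (C.fill e)

/-- Convergence: `e ↓` iff `e →sr* ⊤`. -/
def SConv (e : SExp) : Prop := Relation.ReflTransGen SR e .top

/-!
Both relations are compatible with the term structure and have structural presentations: `→sr`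
contracts a redex at the root, under `¬` or in the left operand of `∧`, while `→top` contracts
`⊤ ∧ e` anywhere. Induct on the `→top` step. If the `→sr` step happens inside the transformed
subterm, the diagram closes by congruence. If it contracts a redex that `→top` created (as in
`¬(⊤ ∧ ⊤) →top ¬⊤ →sr ⊥`), `→sr` can fire `⊤ ∧ e` first and then that redex. If it acts on the
left operand of a `∧` whose right operand was transformed, the two steps commute, or `→sr`
discards the right operand altogether.
-/

inductive StdStep : SExp → SExp → Prop where
  | botAnd (e : SExp) : StdStep (SExp.and .bot e) SExp.bot
  | topAnd (e : SExp) : StdStep (SExp.and .top e) e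
  | negTop : StdStep (SExp.neg .top) SExp.bot
  | negBot : StdStep (SExp.neg .bot) SExp.top
  | neg {x y : SExp} : StdStep x y → StdStep (SExp.neg x) (SExp.neg y)
  | andL {x y : SExp} (r : SExp) : StdStep x y → StdStep (SExp.and x r) (SExp.and y r)

inductive TopStep : SExp → SExp → Prop where
  | here (e : SExp) : TopStep (SExp.and .top e) e
  | neg {x y : SExp} : TopStep x y → TopStep (SExp.neg x) (SExp.neg y)
  | andL {x y : SExp} (r : SExp) : TopStep x y → TopStep (SExp.and x r) (SExp.and y r)
  | andR {x y : SExp} (l : SExp) : TopStep x y → TopStep (SExp.and l x) (SExp.and l y)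

theorem StdStep.fill {x y : SExp} (A : ECtx) (h : StdStep x y) :
    StdStep (A.fill x) (A.fill y) := by
  induction A with
  | hole => exact h
  | neg A ih => exact .neg ih
  | and A r ih => exact .andL r ih

theorem SR.neg {x y : SExp} (h : SR x y) : SR (.neg x) (.neg y) := by
  obtain ⟨_, h⟩ := h
  cases h with
  | bot A e => exact ⟨_, .bot (.neg A) e⟩
  | top A e => exact ⟨_, .top (.neg A) e⟩
  | neg1 A => exact ⟨_, .neg1 (.neg A)⟩
  | neg2 A => exact ⟨_, .neg2 (.neg A)⟩

theorem SR.andL {x y : SExp} (r : SExp) (h : SR x y) : SR (.and x r) (.and y r) := by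
  obtain ⟨_, h⟩ := h
  cases h with
  | bot A e => exact ⟨_, .bot (.and A r) e⟩
  | top A e => exact ⟨_, .top (.and A r) e⟩
  | neg1 A => exact ⟨_, .neg1 (.and A r)⟩
  | neg2 A => exact ⟨_, .neg2 (.and A r)⟩

theorem sr_iff_stdStep {x y : SExp} : SR x y ↔ StdStep x y := by
  constructor
  · rintro ⟨_, h⟩
    cases h with
    | bot A e => exact (StdStep.botAnd e).fill A
    | top A e => exact (StdStep.topAnd e).fill A
    | neg1 A => exact StdStep.negTop.fill A
    | neg2 A => exact StdStep.negBot.fill A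
  · intro h
    induction h with
    | botAnd e => exact ⟨_, .bot .hole e⟩
    | topAnd e => exact ⟨_, .top .hole e⟩
    | negTop => exact ⟨_, .neg1 .hole⟩
    | negBot => exact ⟨_, .neg2 .hole⟩
    | neg _ ih => exact ih.neg
    | andL r _ ih => exact ih.andL r

theorem topT_iff_topStep {x y : SExp} : TopT x y ↔ TopStep x y := by
  constructor
  · rintro ⟨C, e⟩
    induction C with
    | hole => exact .here e
    | neg C ih => exact .neg ih
    | andL C r ih => exact .andL r ih
    | andR l C ih => exact .andR l ih
  · intro h
    induction h with
    | here e => exact .mk .hole e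
    | neg _ ih => obtain ⟨C, e⟩ := ih; exact .mk (.neg C) e
    | andL r _ ih => obtain ⟨C, e⟩ := ih; exact .mk (.andL C r) e
    | andR l _ ih => obtain ⟨C, e⟩ := ih; exact .mk (.andR l C) e

/-- The ways of completing a diagram `e →top · →sr t'`. -/
def DiagramCloses (e t' : SExp) : Prop :=
  StdStep e t' ∨ (∃ e₁, StdStep e e₁ ∧ TopStep e₁ t') ∨ ∃ e₁, StdStep e e₁ ∧ StdStep e₁ t'

theorem DiagramCloses.map {e t' : SExp} (f : SExp → SExp)
    (hstd : ∀ {x y}, StdStep x y → StdStep (f x) (f y))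
    (htop : ∀ {x y}, TopStep x y → TopStep (f x) (f y)) (h : DiagramCloses e t') :
    DiagramCloses (f e) (f t') := by
  rcases h with h | ⟨e₁, h₁, h₂⟩ | ⟨e₁, h₁, h₂⟩
  · exact .inl (hstd h)
  · exact .inr (.inl ⟨f e₁, hstd h₁, htop h₂⟩)
  · exact .inr (.inr ⟨f e₁, hstd h₁, hstd h₂⟩)

theorem TopStep.diagramCloses {e t t' : SExp} (htop : TopStep e t) (hstd : StdStep t t') :
    DiagramCloses e t' := by
  induction htop generalizing t' with
  | here u => exact .inr (.inr ⟨u, .topAnd u, hstd⟩)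
  | neg h ih =>
    cases hstd with
    | negTop => cases h; exact .inr (.inr ⟨_, .neg (.topAnd _), .negTop⟩)
    | negBot => cases h; exact .inr (.inr ⟨_, .neg (.topAnd _), .negBot⟩)
    | neg h' => exact (ih h').map SExp.neg .neg .neg
  | andL r h ih =>
    cases hstd with
    | botAnd => cases h; exact .inr (.inr ⟨_, .andL r (.topAnd _), .botAnd r⟩)
    | topAnd => cases h; exact .inr (.inr ⟨_, .andL r (.topAnd _), .topAnd r⟩)
    | andL _ h' => exact (ih h').map (SExp.and · r) (.andL r) (.andL r)
  | @andR x _ _ h _ =>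
    cases hstd with
    | botAnd => exact .inl (.botAnd _)
    | topAnd => exact .inr (.inl ⟨x, .topAnd x, h⟩)
    | andL _ h' => exact .inr (.inl ⟨_, .andL x h', .andR _ h⟩)

/-- completeness of the commuting diagrams for `(top)` in `Simple`. -/
theorem simple_top_commuting_diagrams :
    ∀ e t t' : SExp, TopT e t → SR t t' →
      SR e t' ∨ (∃ e1, SR e e1 ∧ TopT e1 t') ∨ (∃ e1, SR e e1 ∧ SR e1 t') := by
  intro e t t' htop hsr
  have h := (topT_iff_topStep.1 htop).diagramCloses (sr_iff_stdStep.1 hsr)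
  simpa only [DiagramCloses, ← sr_iff_stdStep, ← topT_iff_topStep] using h
end

section
/- The transformation (top) in Simple reflects convergence: for all Simple expressions e1, e2, if e1 →top e2 and e2↓, then e1↓. -/
/-!
Every expression of `Simple` is a Boolean formula. The standard reduction preserves its
truth value and, conversely, evaluates every expression to the constant for that value, so
`e↓` holds exactly when `e` is true. Since `⊤ ∧ e` and `e` have the same value in every context,
`(top)` preserves truth values and hence reflects (indeed, preserves) convergence.
-/

def SExp.eval : SExp → Bool
  | .bot => false
  | .top => true
  | .neg e => !e.eval
  | .and a b => a.eval && b.eval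

def SExp.ofBool : Bool → SExp
  | false => .bot
  | true => .top

def ECtx.comp : ECtx → ECtx → ECtx
  | .hole, B => B
  | .neg A, B => .neg (A.comp B)
  | .and A t, B => .and (A.comp B) t

theorem ECtx.fill_comp (A B : ECtx) (e : SExp) :
    (A.comp B).fill e = A.fill (B.fill e) := by
  induction A with
  | hole => rfl
  | neg A ih => simp only [ECtx.comp, ECtx.fill, ih]
  | and A t ih => simp only [ECtx.comp, ECtx.fill, ih]

theorem ECtx.eval_fill_congr (A : ECtx) {e e' : SExp} (h : e.eval = e'.eval) :
    (A.fill e).eval = (A.fill e').eval := by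
  induction A with
  | hole => exact h
  | neg A ih => simp only [ECtx.fill, SExp.eval, ih]
  | and A t ih => simp only [ECtx.fill, SExp.eval, ih]

theorem GCtx.eval_fill_congr (C : GCtx) {e e' : SExp} (h : e.eval = e'.eval) :
    (C.fill e).eval = (C.fill e').eval := by
  induction C with
  | hole => exact h
  | neg C ih => simp only [GCtx.fill, SExp.eval, ih]
  | andL C t ih => simp only [GCtx.fill, SExp.eval, ih]
  | andR t C ih => simp only [GCtx.fill, SExp.eval, ih]

namespace SR

theorem fill {e e' : SExp} (A : ECtx) (h : SR e e') : SR (A.fill e) (A.fill e') := by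
  obtain ⟨a, h⟩ := h
  refine ⟨a, ?_⟩
  cases h <;> simp only [← ECtx.fill_comp] <;> constructor

theorem reflTransGen_fill {e e' : SExp} (A : ECtx) (h : Relation.ReflTransGen SR e e') :
    Relation.ReflTransGen SR (A.fill e) (A.fill e') :=
  h.lift A.fill fun _ _ => fill A

theorem eval_eq {e e' : SExp} (h : SR e e') : e.eval = e'.eval := by
  obtain ⟨a, h⟩ := h
  cases h <;> exact ECtx.eval_fill_congr _ rfl

theorem reflTransGen_eval_eq {e e' : SExp} (h : Relation.ReflTransGen SR e e') :
    e.eval = e'.eval := by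
  simpa only [Relation.reflTransGen_eq_self] using h.lift SExp.eval fun _ _ => eval_eq

theorem reflTransGen_ofBool_eval (e : SExp) :
    Relation.ReflTransGen SR e (.ofBool e.eval) := by
  induction e with
  | bot | top => exact .refl
  | neg e ih =>
    refine (reflTransGen_fill (.neg .hole) ih).tail ?_
    simp only [SExp.eval]
    cases e.eval
    · exact ⟨_, SRL.neg2 .hole⟩
    · exact ⟨_, SRL.neg1 .hole⟩
  | and a b iha ihb =>
    refine (reflTransGen_fill (.and .hole b) iha).trans ?_
    simp only [SExp.eval]
    cases a.eval
    · exact .single ⟨_, SRL.bot .hole b⟩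
    · exact .head ⟨_, SRL.top .hole b⟩ ihb

end SR

theorem sConv_iff_eval {e : SExp} : SConv e ↔ e.eval = true := by
  refine ⟨SR.reflTransGen_eval_eq, fun h => ?_⟩
  simpa only [SConv, h, SExp.ofBool] using SR.reflTransGen_ofBool_eval e

theorem TopT.eval_eq {e e' : SExp} (h : TopT e e') : e.eval = e'.eval := by
  obtain ⟨C, e⟩ := h
  exact C.eval_fill_congr (Bool.true_and _)

/-- the transformation `(top)` reflects convergence. -/
theorem simple_top_reflects_convergence :
    ∀ e1 e2 : SExp, TopT e1 e2 → SConv e2 → SConv e1 := by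
  intro e1 e2 htop h2
  rw [sConv_iff_eval] at h2 ⊢
  rw [htop.eval_eq, h2]
end
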